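/- arXiv:1805.04015 — 8 statements merged into one kernel-verified Lean document; each statement's English description precedes it below -/
import Mathlib

section
/- Let p₁, p₂, p₃ be vectors in ℝ^{{0,1}²} with all components nonnegative, and let β₁, β₂ be vectors in ℝ^{{0,1}²} with all components in [0,1]. Suppose β₁ᵀp₁ > (𝟙 − β₂)ᵀp₃ and β₂ᵀp₁ > (𝟙 − β₁)ᵀp₂. Then there exist vectors β₁*, β₂* with 0 ⪯ β₁* ⪯ β₁ and 0 ⪯ β₂* ⪯ β₂ (componentwise) such that: β₁*ᵀp₁ ≤ (𝟙 − β₂*)ᵀp₃, β₂*ᵀp₁ ≤ (𝟙 − β₁*)ᵀp₂, (𝟙 − β₂)ᵀp₃ ≤ β₁*ᵀp₁, and (𝟙 − β₁)ᵀp₂ ≤ β₂*ᵀp₁. -/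
open Finset

theorem downgrade_beta_case2 (p1 p2 p3 β1 β2 : Fin 2 × Fin 2 → ℝ)
    (hp1 : ∀ s, 0 ≤ p1 s) (hp2 : ∀ s, 0 ≤ p2 s) (hp3 : ∀ s, 0 ≤ p3 s)
    (hβ1 : ∀ s, β1 s ∈ Set.Icc (0 : ℝ) 1) (hβ2 : ∀ s, β2 s ∈ Set.Icc (0 : ℝ) 1)
    (h1 : ∑ s, (1 - β2 s) * p3 s < ∑ s, β1 s * p1 s)
    (h2 : ∑ s, (1 - β1 s) * p2 s < ∑ s, β2 s * p1 s) :
    ∃ β1' β2' : Fin 2 × Fin 2 → ℝ,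
      (∀ s, 0 ≤ β1' s ∧ β1' s ≤ β1 s) ∧
      (∀ s, 0 ≤ β2' s ∧ β2' s ≤ β2 s) ∧
      ∑ s, β1' s * p1 s ≤ ∑ s, (1 - β2' s) * p3 s ∧
      ∑ s, β2' s * p1 s ≤ ∑ s, (1 - β1' s) * p2 s ∧
      ∑ s, (1 - β2 s) * p3 s ≤ ∑ s, β1' s * p1 s ∧
      ∑ s, (1 - β1 s) * p2 s ≤ ∑ s, β2' s * p1 s := by
  set A := ∑ s, β1 s * p1 s with hA
  set B := ∑ s, β2 s * p1 s with hB
  set C3 := ∑ s, (1 - β2 s) * p3 s with hC3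
  set C2 := ∑ s, (1 - β1 s) * p2 s with hC2
  have hC3nn : 0 ≤ C3 := Finset.sum_nonneg fun s _ =>
    mul_nonneg (by linarith [(hβ2 s).2]) (hp3 s)
  have hC2nn : 0 ≤ C2 := Finset.sum_nonneg fun s _ =>
    mul_nonneg (by linarith [(hβ1 s).2]) (hp2 s)
  have hApos : 0 < A := lt_of_le_of_lt hC3nn h1
  have hBpos : 0 < B := lt_of_le_of_lt hC2nn h2
  set t1 := C3 / A with ht1
  set t2 := C2 / B with ht2
  have ht1nn : 0 ≤ t1 := div_nonneg hC3nn hApos.le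
  have ht2nn : 0 ≤ t2 := div_nonneg hC2nn hBpos.le
  have ht1le : t1 ≤ 1 := (div_le_one hApos).2 h1.le
  have ht2le : t2 ≤ 1 := (div_le_one hBpos).2 h2.le
  clear_value A B C3 C2 t1 t2
  refine ⟨fun s => t1 * β1 s, fun s => t2 * β2 s, ?_, ?_, ?_, ?_, ?_, ?_⟩
  · intro s
    refine ⟨mul_nonneg ht1nn (hβ1 s).1, ?_⟩
    show t1 * β1 s ≤ β1 s
    nlinarith [(hβ1 s).1]
  · intro s
    refine ⟨mul_nonneg ht2nn (hβ2 s).1, ?_⟩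
    show t2 * β2 s ≤ β2 s
    nlinarith [(hβ2 s).1]
  · have e1 : ∑ s, (t1 * β1 s) * p1 s = C3 := by
      simp only [mul_assoc, ← Finset.mul_sum]
      rw [← hA, ht1, div_mul_cancel₀ _ hApos.ne']
    rw [e1, hC3]
    refine Finset.sum_le_sum fun s _ => ?_
    have h0 := (hβ2 s).1
    have h3 := hp3 s
    show (1 - β2 s) * p3 s ≤ (1 - t2 * β2 s) * p3 s
    nlinarith [mul_nonneg (mul_nonneg (by linarith : (0:ℝ) ≤ 1 - t2) h0) h3]
  · have e2 : ∑ s, (t2 * β2 s) * p1 s = C2 := by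
      simp only [mul_assoc, ← Finset.mul_sum]
      rw [← hB, ht2, div_mul_cancel₀ _ hBpos.ne']
    rw [e2, hC2]
    refine Finset.sum_le_sum fun s _ => ?_
    have h0 := (hβ1 s).1
    have h3 := hp2 s
    show (1 - β1 s) * p2 s ≤ (1 - t1 * β1 s) * p2 s
    nlinarith [mul_nonneg (mul_nonneg (by linarith : (0:ℝ) ≤ 1 - t1) h0) h3]
  · have e1 : ∑ s, (t1 * β1 s) * p1 s = C3 := by
      simp only [mul_assoc, ← Finset.mul_sum]
      rw [← hA, ht1, div_mul_cancel₀ _ hApos.ne']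
    rw [e1]
  · have e2 : ∑ s, (t2 * β2 s) * p1 s = C2 := by
      simp only [mul_assoc, ← Finset.mul_sum]
      rw [← hB, ht2, div_mul_cancel₀ _ hBpos.ne']
    rw [e2]
end

section
/- Let p₁, p₂, p₃ be vectors in ℝ^{{0,1}²} with all components nonnegative, and let β₁*, β₂* be vectors with all components in [0,1] satisfying β₁*ᵀp₁ ≤ (𝟙 − β₂*)ᵀp₃ and β₂*ᵀp₁ ≤ (𝟙 − β₁*)ᵀp₂. Define componentwise α_{1⊗2} := min{β₁*, β₂*}, α₁ := max{β₁* − β₂*, 0}, α₂ := max{β₂* − β₁*, 0}. Then: all components of α₁, α₂, α_{1⊗2} lie in [0,1]; α₁ + α₂ + α_{1⊗2} ⪯ 𝟙; α₁ + α_{1⊗2} = β₁* and α₂ + α_{1⊗2} = β₂*; and the constraints (α₂ + α_{1⊗2})ᵀp₃ + (α₁ + α_{1⊗2})ᵀp₁ ≤ 𝟙ᵀp₃ and (α₁ + α_{1⊗2})ᵀp₂ + (α₂ + α_{1⊗2})ᵀp₁ ≤ 𝟙ᵀp₂ hold. -/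
open Finset

theorem alpha_from_beta_feasible (p1 p2 p3 β1 β2 : Fin 2 × Fin 2 → ℝ)
    (hp1 : ∀ s, 0 ≤ p1 s) (hp2 : ∀ s, 0 ≤ p2 s) (hp3 : ∀ s, 0 ≤ p3 s)
    (hβ1 : ∀ s, β1 s ∈ Set.Icc (0 : ℝ) 1) (hβ2 : ∀ s, β2 s ∈ Set.Icc (0 : ℝ) 1)
    (h1 : ∑ s, β1 s * p1 s ≤ ∑ s, (1 - β2 s) * p3 s)
    (h2 : ∑ s, β2 s * p1 s ≤ ∑ s, (1 - β1 s) * p2 s)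
    (α12 α1 α2 : Fin 2 × Fin 2 → ℝ)
    (hα12 : ∀ s, α12 s = min (β1 s) (β2 s))
    (hα1 : ∀ s, α1 s = max (β1 s - β2 s) 0)
    (hα2 : ∀ s, α2 s = max (β2 s - β1 s) 0) :
    (∀ s, α1 s ∈ Set.Icc (0 : ℝ) 1) ∧
    (∀ s, α2 s ∈ Set.Icc (0 : ℝ) 1) ∧
    (∀ s, α12 s ∈ Set.Icc (0 : ℝ) 1) ∧
    (∀ s, α1 s + α2 s + α12 s ≤ 1) ∧
    (∀ s, α1 s + α12 s = β1 s) ∧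
    (∀ s, α2 s + α12 s = β2 s) ∧
    ∑ s, (α2 s + α12 s) * p3 s + ∑ s, (α1 s + α12 s) * p1 s ≤ ∑ s, p3 s ∧
    ∑ s, (α1 s + α12 s) * p2 s + ∑ s, (α2 s + α12 s) * p1 s ≤ ∑ s, p2 s := by
  have e1 : ∀ s, α1 s + α12 s = β1 s := by
    intro s
    have ⟨ha1, hb1⟩ := hβ1 s; have ⟨ha2, hb2⟩ := hβ2 s
    rw [hα1 s, hα12 s]
    rcases le_total (β1 s) (β2 s) with h | h
    · rw [max_eq_right (by linarith), min_eq_left h]; ring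
    · rw [max_eq_left (by linarith), min_eq_right h]; ring
  have e2 : ∀ s, α2 s + α12 s = β2 s := by
    intro s
    have ⟨ha1, hb1⟩ := hβ1 s; have ⟨ha2, hb2⟩ := hβ2 s
    rw [hα2 s, hα12 s]
    rcases le_total (β1 s) (β2 s) with h | h
    · rw [max_eq_left (by linarith), min_eq_left h]; ring
    · rw [max_eq_right (by linarith), min_eq_right h]; ring
  refine ⟨?_, ?_, ?_, ?_, e1, e2, ?_, ?_⟩
  · intro s
    have ⟨ha1, hb1⟩ := hβ1 s; have ⟨ha2, hb2⟩ := hβ2 s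
    rw [hα1 s]
    constructor
    · exact le_max_right _ _
    · exact max_le (by linarith) (by norm_num)
  · intro s
    have ⟨ha1, hb1⟩ := hβ1 s; have ⟨ha2, hb2⟩ := hβ2 s
    rw [hα2 s]
    constructor
    · exact le_max_right _ _
    · exact max_le (by linarith) (by norm_num)
  · intro s
    have ⟨ha1, hb1⟩ := hβ1 s; have ⟨ha2, hb2⟩ := hβ2 s
    rw [hα12 s]
    constructor
    · exact le_min ha1 ha2
    · exact min_le_of_left_le hb1
  · intro s
    have ⟨ha1, hb1⟩ := hβ1 s; have ⟨ha2, hb2⟩ := hβ2 s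
    rw [hα1 s, hα2 s, hα12 s]
    rcases le_total (β1 s) (β2 s) with h | h
    · rw [max_eq_right (by linarith), max_eq_left (by linarith), min_eq_left h]; linarith
    · rw [max_eq_left (by linarith), max_eq_right (by linarith), min_eq_right h]; linarith
  · have : ∑ s, (α2 s + α12 s) * p3 s = ∑ s, β2 s * p3 s := by
      apply Finset.sum_congr rfl; intro s _; rw [e2 s]
    rw [this]
    have : ∑ s, (α1 s + α12 s) * p1 s = ∑ s, β1 s * p1 s := by
      apply Finset.sum_congr rfl; intro s _; rw [e1 s]
    rw [this]
    have hsub : ∑ s, (1 - β2 s) * p3 s = ∑ s, p3 s - ∑ s, β2 s * p3 s := by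
      rw [← Finset.sum_sub_distrib]; apply Finset.sum_congr rfl; intro s _; ring
    linarith [h1, hsub ▸ h1]
  · have : ∑ s, (α1 s + α12 s) * p2 s = ∑ s, β1 s * p2 s := by
      apply Finset.sum_congr rfl; intro s _; rw [e1 s]
    rw [this]
    have : ∑ s, (α2 s + α12 s) * p1 s = ∑ s, β2 s * p1 s := by
      apply Finset.sum_congr rfl; intro s _; rw [e2 s]
    rw [this]
    have hsub : ∑ s, (1 - β1 s) * p2 s = ∑ s, p2 s - ∑ s, β1 s * p2 s := by
      rw [← Finset.sum_sub_distrib]; apply Finset.sum_congr rfl; intro s _; ring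
    linarith [h2, hsub ▸ h2]
end

section
/- Let p₁, p₂, p₃ be vectors in ℝ^{{0,1}²} with all components nonnegative. For any vectors β₁, β₂ with all components in [0,1], there exist vectors α₁, α₂, α_{1⊗2} with all components in [0,1] such that: (i) α₁ + α₂ + α_{1⊗2} ⪯ 𝟙; (ii) (α₂ + α_{1⊗2})ᵀp₃ + (α₁ + α_{1⊗2})ᵀp₁ ≤ 𝟙ᵀp₃; (iii) (α₁ + α_{1⊗2})ᵀp₂ + (α₂ + α_{1⊗2})ᵀp₁ ≤ 𝟙ᵀp₂; (iv) min{β₁ᵀp₁, (𝟙 − β₂)ᵀp₃} ≤ (α₁ + α_{1⊗2})ᵀp₁; and (v) min{β₂ᵀp₁, (𝟙 − β₁)ᵀp₂} ≤ (α₂ + α_{1⊗2})ᵀp₁. -/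
open Finset

theorem outer_bound_achievable (p1 p2 p3 : Fin 2 × Fin 2 → ℝ)
    (hp1 : ∀ s, 0 ≤ p1 s) (hp2 : ∀ s, 0 ≤ p2 s) (hp3 : ∀ s, 0 ≤ p3 s)
    (β1 β2 : Fin 2 × Fin 2 → ℝ)
    (hβ1 : ∀ s, β1 s ∈ Set.Icc (0 : ℝ) 1) (hβ2 : ∀ s, β2 s ∈ Set.Icc (0 : ℝ) 1) :
    ∃ α1 α2 α12 : Fin 2 × Fin 2 → ℝ,
      (∀ s, α1 s ∈ Set.Icc (0 : ℝ) 1) ∧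
      (∀ s, α2 s ∈ Set.Icc (0 : ℝ) 1) ∧
      (∀ s, α12 s ∈ Set.Icc (0 : ℝ) 1) ∧
      (∀ s, α1 s + α2 s + α12 s ≤ 1) ∧
      ∑ s, (α2 s + α12 s) * p3 s + ∑ s, (α1 s + α12 s) * p1 s ≤ ∑ s, p3 s ∧
      ∑ s, (α1 s + α12 s) * p2 s + ∑ s, (α2 s + α12 s) * p1 s ≤ ∑ s, p2 s ∧
      min (∑ s, β1 s * p1 s) (∑ s, (1 - β2 s) * p3 s) ≤ ∑ s, (α1 s + α12 s) * p1 s ∧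
      min (∑ s, β2 s * p1 s) (∑ s, (1 - β1 s) * p2 s) ≤ ∑ s, (α2 s + α12 s) * p1 s := by
  set A1 := ∑ s, β1 s * p1 s with hA1def
  set B1 := ∑ s, (1 - β2 s) * p3 s with hB1def
  set A2 := ∑ s, β2 s * p1 s with hA2def
  set B2 := ∑ s, (1 - β1 s) * p2 s with hB2def
  have hA1n : 0 ≤ A1 := Finset.sum_nonneg fun s _ => mul_nonneg (hβ1 s).1 (hp1 s)
  have hB1n : 0 ≤ B1 := Finset.sum_nonneg fun s _ =>
    mul_nonneg (by linarith [(hβ2 s).2]) (hp3 s)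
  have hA2n : 0 ≤ A2 := Finset.sum_nonneg fun s _ => mul_nonneg (hβ2 s).1 (hp1 s)
  have hB2n : 0 ≤ B2 := Finset.sum_nonneg fun s _ =>
    mul_nonneg (by linarith [(hβ1 s).2]) (hp2 s)
  set t : ℝ := if A1 ≤ B1 then 1 else B1 / A1 with htdef
  set u : ℝ := if A2 ≤ B2 then 1 else B2 / A2 with hudef
  have ht0 : 0 ≤ t := by
    rw [htdef]; split
    · norm_num
    · exact div_nonneg hB1n hA1n
  have ht1 : t ≤ 1 := by
    rw [htdef]; split
    · norm_num
    · rename_i h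
      exact div_le_one_of_le₀ (by linarith [not_le.mp h]) hA1n
  have htA : t * A1 = min A1 B1 := by
    rw [htdef]; split
    · rename_i h; rw [min_eq_left h]; ring
    · rename_i h
      have hpos : 0 < A1 := by linarith [not_le.mp h, hB1n]
      rw [min_eq_right (by linarith [not_le.mp h])]
      field_simp
  have hu0 : 0 ≤ u := by
    rw [hudef]; split
    · norm_num
    · exact div_nonneg hB2n hA2n
  have hu1 : u ≤ 1 := by
    rw [hudef]; split
    · norm_num
    · rename_i h
      exact div_le_one_of_le₀ (by linarith [not_le.mp h]) hA2n
  have huA : u * A2 = min A2 B2 := by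
    rw [hudef]; split
    · rename_i h; rw [min_eq_left h]; ring
    · rename_i h
      have hpos : 0 < A2 := by linarith [not_le.mp h, hB2n]
      rw [min_eq_right (by linarith [not_le.mp h])]
      field_simp
  set x : Fin 2 × Fin 2 → ℝ := fun s => t * β1 s with hxdef
  set y : Fin 2 × Fin 2 → ℝ := fun s => u * β2 s with hydef
  have hx0 : ∀ s, 0 ≤ x s := fun s => mul_nonneg ht0 (hβ1 s).1
  have hx1 : ∀ s, x s ≤ 1 := fun s => mul_le_one₀ ht1 (hβ1 s).1 (hβ1 s).2
  have hy0 : ∀ s, 0 ≤ y s := fun s => mul_nonneg hu0 (hβ2 s).1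
  have hy1 : ∀ s, y s ≤ 1 := fun s => mul_le_one₀ hu1 (hβ2 s).1 (hβ2 s).2
  set M : Fin 2 × Fin 2 → ℝ := fun s => max 0 (x s + y s - 1) with hMdef
  have hM0 : ∀ s, 0 ≤ M s := fun s => le_max_left _ _
  have hM2 : ∀ s, x s + y s - 1 ≤ M s := fun s => le_max_right _ _
  have hMx : ∀ s, M s ≤ x s := fun s => max_le (hx0 s) (by linarith [hy1 s])
  have hMy : ∀ s, M s ≤ y s := fun s => max_le (hy0 s) (by linarith [hx1 s])
  have hM1 : ∀ s, M s ≤ 1 := fun s => max_le (by norm_num) (by linarith [hx1 s, hy1 s])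
  have hXq : ∀ q : Fin 2 × Fin 2 → ℝ,
      ∑ s, ((x s - M s) + M s) * q s = t * ∑ s, β1 s * q s := by
    intro q
    rw [Finset.mul_sum]
    exact Finset.sum_congr rfl fun s _ => by rw [hxdef]; ring
  have hYq : ∀ q : Fin 2 × Fin 2 → ℝ,
      ∑ s, ((y s - M s) + M s) * q s = u * ∑ s, β2 s * q s := by
    intro q
    rw [Finset.mul_sum]
    exact Finset.sum_congr rfl fun s _ => by rw [hydef]; ring
  have hB1s : B1 = ∑ s, p3 s - ∑ s, β2 s * p3 s := by
    rw [hB1def, ← Finset.sum_sub_distrib]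
    exact Finset.sum_congr rfl fun s _ => by ring
  have hB2s : B2 = ∑ s, p2 s - ∑ s, β1 s * p2 s := by
    rw [hB2def, ← Finset.sum_sub_distrib]
    exact Finset.sum_congr rfl fun s _ => by ring
  have hs3 : 0 ≤ ∑ s, β2 s * p3 s := Finset.sum_nonneg fun s _ =>
    mul_nonneg (hβ2 s).1 (hp3 s)
  have hs2 : 0 ≤ ∑ s, β1 s * p2 s := Finset.sum_nonneg fun s _ =>
    mul_nonneg (hβ1 s).1 (hp2 s)
  refine ⟨fun s => x s - M s, fun s => y s - M s, M, ?_, ?_, ?_, ?_, ?_, ?_, ?_, ?_⟩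
  · intro s
    constructor
    · show (0:ℝ) ≤ x s - M s; linarith [hMx s]
    · show x s - M s ≤ 1; linarith [hM0 s, hx1 s]
  · intro s
    constructor
    · show (0:ℝ) ≤ y s - M s; linarith [hMy s]
    · show y s - M s ≤ 1; linarith [hM0 s, hy1 s]
  · intro s
    exact ⟨hM0 s, hM1 s⟩
  · intro s
    simp only
    linarith [hM2 s]
  · rw [hXq p1, hYq p3, ← hA1def, htA]
    have h2 : u * ∑ s, β2 s * p3 s ≤ ∑ s, β2 s * p3 s := by nlinarith
    have h1 : min A1 B1 ≤ B1 := min_le_right _ _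
    linarith
  · rw [hXq p2, hYq p1, ← hA2def, huA]
    have h2 : t * ∑ s, β1 s * p2 s ≤ ∑ s, β1 s * p2 s := by nlinarith
    have h1 : min A2 B2 ≤ B2 := min_le_right _ _
    linarith
  · rw [hXq p1, ← hA1def, htA]
  · rw [hYq p1, ← hA2def, huA]
end

section
/- Let p₁, p₂, p₃ be vectors in ℝ^{{0,1}²} with all components nonnegative, and let a, b be vectors with all components in [0,1] satisfying aᵀp₂ + bᵀp₁ ≤ 𝟙ᵀp₂ and bᵀp₃ + aᵀp₁ ≤ 𝟙ᵀp₃. Then for every real μ ≥ 1: aᵀp₁ + μ·bᵀp₁ ≤ Σ_ŝ max{p₁(ŝ), μ·p₂(ŝ)} and bᵀp₁ + μ·aᵀp₁ ≤ Σ_ŝ max{p₁(ŝ), μ·p₃(ŝ)}. -/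
open Finset

theorem achievable_in_weighted_sum_bound (p1 p2 p3 a b : Fin 2 × Fin 2 → ℝ)
    (hp1 : ∀ s, 0 ≤ p1 s) (hp2 : ∀ s, 0 ≤ p2 s) (hp3 : ∀ s, 0 ≤ p3 s)
    (ha : ∀ s, a s ∈ Set.Icc (0 : ℝ) 1) (hb : ∀ s, b s ∈ Set.Icc (0 : ℝ) 1)
    (h1 : ∑ s, a s * p2 s + ∑ s, b s * p1 s ≤ ∑ s, p2 s)
    (h2 : ∑ s, b s * p3 s + ∑ s, a s * p1 s ≤ ∑ s, p3 s)
    (μ : ℝ) (hμ : 1 ≤ μ) :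
    ∑ s, a s * p1 s + μ * ∑ s, b s * p1 s ≤ ∑ s, max (p1 s) (μ * p2 s) ∧
    ∑ s, b s * p1 s + μ * ∑ s, a s * p1 s ≤ ∑ s, max (p1 s) (μ * p3 s) := by
  have hμ0 : (0:ℝ) ≤ μ := le_trans zero_le_one hμ
  have key : ∀ (c : Fin 2 × Fin 2 → ℝ) (q : Fin 2 × Fin 2 → ℝ),
      (∀ s, 0 ≤ q s) → (∀ s, c s ∈ Set.Icc (0:ℝ) 1) →
      ∀ s, c s * p1 s + μ * ((1 - c s) * q s) ≤ max (p1 s) (μ * q s) := by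
    intro c q hq hc s
    obtain ⟨h0, h1'⟩ := hc s
    have m1 : p1 s ≤ max (p1 s) (μ * q s) := le_max_left _ _
    have m2 : μ * q s ≤ max (p1 s) (μ * q s) := le_max_right _ _
    have hp := hp1 s
    nlinarith [mul_nonneg hμ0 (hq s)]
  constructor
  · have step : ∑ s, a s * p1 s + μ * ∑ s, b s * p1 s ≤
        ∑ s, (a s * p1 s + μ * ((1 - a s) * p2 s)) := by
      have : ∑ s, b s * p1 s ≤ ∑ s, p2 s - ∑ s, a s * p2 s := by linarith
      have h' := mul_le_mul_of_nonneg_left this hμ0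
      rw [Finset.sum_add_distrib, ← Finset.mul_sum]
      have : ∑ s, (1 - a s) * p2 s = ∑ s, p2 s - ∑ s, a s * p2 s := by
        rw [← Finset.sum_sub_distrib]; apply Finset.sum_congr rfl; intros; ring
      rw [this]; linarith
    refine step.trans (Finset.sum_le_sum fun s _ => key a p2 hp2 ha s)
  · have step : ∑ s, b s * p1 s + μ * ∑ s, a s * p1 s ≤
        ∑ s, (b s * p1 s + μ * ((1 - b s) * p3 s)) := by
      have : ∑ s, a s * p1 s ≤ ∑ s, p3 s - ∑ s, b s * p3 s := by linarith
      have h' := mul_le_mul_of_nonneg_left this hμ0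
      rw [Finset.sum_add_distrib, ← Finset.mul_sum]
      have : ∑ s, (1 - b s) * p3 s = ∑ s, p3 s - ∑ s, b s * p3 s := by
        rw [← Finset.sum_sub_distrib]; apply Finset.sum_congr rfl; intros; ring
      rw [this]; linarith
    refine step.trans (Finset.sum_le_sum fun s _ => key b p3 hp3 hb s)
end

section
/- Let p₁, p₂, p₃ be vectors in ℝ^{{0,1}²} with all components nonnegative, and let β₁, β₂ be vectors with all components in [0,1]. Then for every real μ ≥ 1: min{β₁ᵀp₁, (𝟙 − β₂)ᵀp₃} + μ·min{β₂ᵀp₁, (𝟙 − β₁)ᵀp₂} ≤ Σ_ŝ max{p₁(ŝ), μ·p₂(ŝ)} and min{β₂ᵀp₁, (𝟙 − β₁)ᵀp₂} + μ·min{β₁ᵀp₁, (𝟙 − β₂)ᵀp₃} ≤ Σ_ŝ max{p₁(ŝ), μ·p₃(ŝ)}. -/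
open Finset

theorem beta_region_in_weighted_sum_bound (p1 p2 p3 β1 β2 : Fin 2 × Fin 2 → ℝ)
    (hp1 : ∀ s, 0 ≤ p1 s) (hp2 : ∀ s, 0 ≤ p2 s) (hp3 : ∀ s, 0 ≤ p3 s)
    (hβ1 : ∀ s, β1 s ∈ Set.Icc (0 : ℝ) 1) (hβ2 : ∀ s, β2 s ∈ Set.Icc (0 : ℝ) 1)
    (μ : ℝ) (hμ : 1 ≤ μ) :
    min (∑ s, β1 s * p1 s) (∑ s, (1 - β2 s) * p3 s) +
      μ * min (∑ s, β2 s * p1 s) (∑ s, (1 - β1 s) * p2 s) ≤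
        ∑ s, max (p1 s) (μ * p2 s) ∧
    min (∑ s, β2 s * p1 s) (∑ s, (1 - β1 s) * p2 s) +
      μ * min (∑ s, β1 s * p1 s) (∑ s, (1 - β2 s) * p3 s) ≤
        ∑ s, max (p1 s) (μ * p3 s) := by
  have hμ0 : 0 ≤ μ := le_trans zero_le_one hμ
  constructor
  · calc min (∑ s, β1 s * p1 s) (∑ s, (1 - β2 s) * p3 s) +
        μ * min (∑ s, β2 s * p1 s) (∑ s, (1 - β1 s) * p2 s)
        ≤ (∑ s, β1 s * p1 s) + μ * ∑ s, (1 - β1 s) * p2 s := by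
          gcongr
          · exact min_le_left _ _
          · exact min_le_right _ _
      _ = ∑ s, (β1 s * p1 s + (1 - β1 s) * (μ * p2 s)) := by
          rw [Finset.mul_sum, ← Finset.sum_add_distrib]
          exact Finset.sum_congr rfl (fun s _ => by ring)
      _ ≤ ∑ s, max (p1 s) (μ * p2 s) := by
          apply Finset.sum_le_sum
          intro s _
          obtain ⟨h0, h1⟩ := hβ1 s
          have ha := le_max_left (p1 s) (μ * p2 s)
          have hb := le_max_right (p1 s) (μ * p2 s)
          nlinarith [mul_nonneg h0 (sub_nonneg.2 ha), mul_nonneg (sub_nonneg.2 h1) (sub_nonneg.2 hb)]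
  · calc min (∑ s, β2 s * p1 s) (∑ s, (1 - β1 s) * p2 s) +
        μ * min (∑ s, β1 s * p1 s) (∑ s, (1 - β2 s) * p3 s)
        ≤ (∑ s, β2 s * p1 s) + μ * ∑ s, (1 - β2 s) * p3 s := by
          gcongr
          · exact min_le_left _ _
          · exact min_le_right _ _
      _ = ∑ s, (β2 s * p1 s + (1 - β2 s) * (μ * p3 s)) := by
          rw [Finset.mul_sum, ← Finset.sum_add_distrib]
          exact Finset.sum_congr rfl (fun s _ => by ring)
      _ ≤ ∑ s, max (p1 s) (μ * p3 s) := by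
          apply Finset.sum_le_sum
          intro s _
          obtain ⟨h0, h1⟩ := hβ2 s
          have ha := le_max_left (p1 s) (μ * p3 s)
          have hb := le_max_right (p1 s) (μ * p3 s)
          nlinarith [mul_nonneg h0 (sub_nonneg.2 ha), mul_nonneg (sub_nonneg.2 h1) (sub_nonneg.2 hb)]
end

section
/- Let I be a nonempty finite index set and let u, v : I → ℝ with u(i) ≥ 0 and v(i) > 0 for all i ∈ I. Define h : [1, ∞) → ℝ by h(μ) = (Σ_{i ∈ I} max{u(i), μ·v(i)})/(1 + μ). Then the infimum of h over μ ≥ 1 is attained, and it is attained at some μ belonging to the finite set {1} ∪ {u(i)/v(i) : i ∈ I, u(i)/v(i) ≥ 1}. -/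
open Finset

theorem optimal_mu_at_breakpoint {I : Type*} [Fintype I] [Nonempty I]
    (u v : I → ℝ) (hu : ∀ i, 0 ≤ u i) (hv : ∀ i, 0 < v i) :
    ∃ μ₀ : ℝ, 1 ≤ μ₀ ∧
      (μ₀ = 1 ∨ ∃ i : I, μ₀ = u i / v i ∧ 1 ≤ u i / v i) ∧
      ∀ μ : ℝ, 1 ≤ μ →
        (∑ i, max (u i) (μ₀ * v i)) / (1 + μ₀) ≤ (∑ i, max (u i) (μ * v i)) / (1 + μ) := by
  classical
  set f : ℝ → ℝ := fun μ => (∑ i, max (u i) (μ * v i)) / (1 + μ) with hf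
  set S : Finset ℝ := insert (1:ℝ)
    ((Finset.univ.filter (fun i => 1 ≤ u i / v i)).image (fun i => u i / v i)) with hS
  have hSne : S.Nonempty := ⟨1, by simp [hS]⟩
  have hSmem : ∀ c ∈ S, 1 ≤ c ∧ (c = 1 ∨ ∃ i, c = u i / v i ∧ 1 ≤ u i / v i) := by
    intro c hc
    simp only [hS, mem_insert, mem_image, mem_filter, mem_univ, true_and] at hc
    rcases hc with rfl | ⟨i, hi, rfl⟩
    · exact ⟨le_refl 1, Or.inl rfl⟩
    · exact ⟨hi, Or.inr ⟨i, rfl, hi⟩⟩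
  obtain ⟨μ₀, hμ₀S, hmin⟩ := S.exists_min_image f hSne
  obtain ⟨hμ₀1, hμ₀alt⟩ := hSmem μ₀ hμ₀S
  refine ⟨μ₀, hμ₀1, hμ₀alt, ?_⟩
  intro μ hμ
  suffices h : ∃ c ∈ S, f c ≤ f μ by
    obtain ⟨c, hcS, hc⟩ := h
    exact (hmin c hcS).trans hc
  set T : Finset I := Finset.univ.filter (fun i => u i ≤ μ * v i) with hT
  set A : ℝ := ∑ i ∈ Tᶜ, u i with hA
  set B : ℝ := ∑ i ∈ T, v i with hB
  have hA0 : 0 ≤ A := Finset.sum_nonneg fun i _ => hu i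
  have hB0 : 0 ≤ B := Finset.sum_nonneg fun i _ => (hv i).le
  have hsplit : ∀ t : ℝ, (∀ i ∈ T, u i ≤ t * v i) → (∀ i ∈ Tᶜ, t * v i ≤ u i) →
      f t = (A + t * B) / (1 + t) := by
    intro t h1 h2
    have h1' : ∑ i ∈ T, max (u i) (t * v i) = t * B := by
      rw [hB, Finset.mul_sum]
      exact Finset.sum_congr rfl fun i hi => max_eq_right (h1 i hi)
    have h2' : ∑ i ∈ Tᶜ, max (u i) (t * v i) = A := by
      rw [hA]
      exact Finset.sum_congr rfl fun i hi => max_eq_left (h2 i hi)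
    have hsum : ∑ i, max (u i) (t * v i) = A + t * B := by
      rw [← Finset.sum_add_sum_compl T, h1', h2', add_comm]
    simp [hf, hsum]
  have hTc_lt : ∀ i ∈ Tᶜ, μ * v i < u i := by
    intro i hi
    have := Finset.mem_compl.mp hi
    have h' : ¬ u i ≤ μ * v i := by simpa [hT] using this
    linarith [not_le.mp h']
  have hfμ : f μ = (A + μ * B) / (1 + μ) := by
    apply hsplit
    · intro i hi; exact (Finset.mem_filter.mp hi).2
    · intro i hi; exact (hTc_lt i hi).le
  rcases le_or_gt A B with hAB | hAB
  · -- take L = largest candidate ≤ μ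
    have h1mem : (1:ℝ) ∈ S.filter (· ≤ μ) := by
      simp [hS, hμ]
    set L : ℝ := (S.filter (· ≤ μ)).max' ⟨1, h1mem⟩ with hL
    have hLmem := (S.filter (· ≤ μ)).max'_mem ⟨1, h1mem⟩
    have hLS : L ∈ S := (Finset.mem_filter.mp hLmem).1
    have hLμ : L ≤ μ := (Finset.mem_filter.mp hLmem).2
    have hL1 : 1 ≤ L := Finset.le_max' _ 1 h1mem
    have hfL : f L = (A + L * B) / (1 + L) := by
      apply hsplit
      · intro i hi
        have hiT : u i ≤ μ * v i := (Finset.mem_filter.mp hi).2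
        rcases le_or_gt 1 (u i / v i) with hr | hr
        · have hrS : u i / v i ∈ S.filter (· ≤ μ) := by
            refine Finset.mem_filter.mpr ⟨?_, ?_⟩
            · simp only [hS, mem_insert, mem_image, mem_filter, mem_univ, true_and]
              exact Or.inr ⟨i, hr, rfl⟩
            · exact (div_le_iff₀ (hv i)).mpr (by linarith)
          have := Finset.le_max' _ _ hrS
          have := (div_le_iff₀ (hv i)).mp (this.trans_eq hL.symm)
          linarith
        · have : u i < v i := by
            have := (div_lt_one (hv i)).mp hr
            linarith
          nlinarith [hv i]
      · intro i hi
        have := hTc_lt i hi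
        nlinarith [hv i]
    refine ⟨L, hLS, ?_⟩
    rw [hfL, hfμ]
    rw [div_le_div_iff₀ (by linarith) (by linarith)]
    nlinarith [mul_nonneg (sub_nonneg.mpr hLμ) (sub_nonneg.mpr hAB)]
  · -- B < A : take R = smallest breakpoint > μ
    have hTcne : Tᶜ.Nonempty := by
      by_contra hcon
      rw [Finset.not_nonempty_iff_eq_empty] at hcon
      rw [hA, hcon, Finset.sum_empty] at hAB
      linarith
    have hIne : (Tᶜ.image (fun i => u i / v i)).Nonempty := hTcne.image _
    set R : ℝ := (Tᶜ.image (fun i => u i / v i)).min' hIne with hR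
    obtain ⟨j, hjTc, hjR⟩ := Finset.mem_image.mp ((Tᶜ.image (fun i => u i / v i)).min'_mem hIne)
    have hμR : μ < R := by
      rw [hR, ← hjR]
      exact (lt_div_iff₀ (hv j)).mpr (hTc_lt j hjTc)
    have hRS : R ∈ S := by
      simp only [hS, mem_insert, mem_image, mem_filter, mem_univ, true_and]
      exact Or.inr ⟨j, by rw [hjR, ← hR]; linarith, hjR.trans hR.symm⟩
    have hfR : f R = (A + R * B) / (1 + R) := by
      apply hsplit
      · intro i hi
        have hiT : u i ≤ μ * v i := (Finset.mem_filter.mp hi).2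
        nlinarith [hv i]
      · intro i hi
        have : R ≤ u i / v i := Finset.min'_le _ _ (Finset.mem_image_of_mem _ hi)
        exact (le_div_iff₀ (hv i)).mp this
    refine ⟨R, hRS, ?_⟩
    rw [hfR, hfμ]
    rw [div_le_div_iff₀ (by linarith) (by linarith)]
    nlinarith [mul_nonneg (sub_nonneg.mpr hμR.le) (sub_nonneg.mpr hAB.le)]
end

section
/- For every real ε with 0 ≤ ε < 1: min over μ ≥ 1 of max{1 − ε², μ(1 − ε)}/(1 + μ) equals (1 − ε²)/(2 + ε), and the minimum is attained at μ = 1 + ε. -/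
theorem feedback_only_symmetric_rate (ε : ℝ) (h0 : 0 ≤ ε) (h1 : ε < 1) :
    IsLeast ((fun μ => max (1 - ε ^ 2) (μ * (1 - ε)) / (1 + μ)) '' Set.Ici 1)
        ((1 - ε ^ 2) / (2 + ε)) ∧
      max (1 - ε ^ 2) ((1 + ε) * (1 - ε)) / (1 + (1 + ε)) = (1 - ε ^ 2) / (2 + ε) := by
  have hmaxeq : max (1 - ε ^ 2) ((1 + ε) * (1 - ε)) = 1 - ε ^ 2 := by
    rw [max_eq_left]; nlinarith
  have hval : max (1 - ε ^ 2) ((1 + ε) * (1 - ε)) / (1 + (1 + ε)) = (1 - ε ^ 2) / (2 + ε) := by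
    rw [hmaxeq]; ring_nf
  refine ⟨⟨⟨1 + ε, by simp [h0], hval⟩, ?_⟩, hval⟩
  rintro x ⟨μ, hμ, rfl⟩
  simp only [Set.mem_Ici] at hμ
  have h2 : (0:ℝ) < 2 + ε := by linarith
  have hμ1 : (0:ℝ) < 1 + μ := by linarith
  rcases le_total μ (1 + ε) with hc | hc
  · calc (1 - ε ^ 2) / (2 + ε) ≤ (1 - ε ^ 2) / (1 + μ) := by
          apply div_le_div_of_nonneg_left (by nlinarith) hμ1 (by linarith)
    _ ≤ max (1 - ε ^ 2) (μ * (1 - ε)) / (1 + μ) := by gcongr; exact le_max_left _ _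
  · calc (1 - ε ^ 2) / (2 + ε) ≤ μ * (1 - ε) / (1 + μ) := by
          rw [div_le_div_iff₀ h2 hμ1]; nlinarith
    _ ≤ max (1 - ε ^ 2) (μ * (1 - ε)) / (1 + μ) := by gcongr; exact le_max_right _ _
end

section
/- Let x, y be reals with 0 < x ≤ y ≤ 1 and x < 1. Then x(y − x)/(2x + 1) + (1 − x)(1 + y)/(2 + y) ≥ (1 − x²)/(2 + x); moreover, already the second term alone satisfies (1 − x)(1 + y)/(2 + y) ≥ (1 − x²)/(2 + x), and the full inequality is strict whenever y > x. -/
theorem mixed_rate_ge_feedback_rate (x y : ℝ)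
    (hx0 : 0 < x) (hxy : x ≤ y) (hy1 : y ≤ 1) (hx1 : x < 1) :
    (1 - x ^ 2) / (2 + x) ≤
        x * (y - x) / (2 * x + 1) + (1 - x) * (1 + y) / (2 + y) ∧
      (1 - x ^ 2) / (2 + x) ≤ (1 - x) * (1 + y) / (2 + y) ∧
      (x < y →
        (1 - x ^ 2) / (2 + x) <
          x * (y - x) / (2 * x + 1) + (1 - x) * (1 + y) / (2 + y)) := by
  have h2x : (0:ℝ) < 2 + x := by linarith
  have h2y : (0:ℝ) < 2 + y := by linarith
  have h21 : (0:ℝ) < 2 * x + 1 := by linarith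
  have hsecond : (1 - x ^ 2) / (2 + x) ≤ (1 - x) * (1 + y) / (2 + y) := by
    rw [div_le_div_iff₀ h2x h2y]
    nlinarith [mul_nonneg (sub_nonneg.2 hx1.le) (sub_nonneg.2 hxy)]
  have hfirst : 0 ≤ x * (y - x) / (2 * x + 1) :=
    div_nonneg (mul_nonneg hx0.le (by linarith)) h21.le
  refine ⟨by linarith, hsecond, fun hlt => ?_⟩
  have hfirst' : 0 < x * (y - x) / (2 * x + 1) :=
    div_pos (mul_pos hx0 (by linarith)) h21
  linarith
end
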